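/- Let a ∈ ℝ with a < −2^{5/4}, and let a₁₂₁, a₂₁₁ ∈ ℝ be free parameters. Define the constants C₁ = −(3/16)(3a⁴+4a²+44), C₂ = −(a/48)(3a⁴+12a²+116), C₃ = −(1/8)(a⁴+2a²+5), C₄ = −(1/16)(9a⁴−20a²+172), C₅ = −(3a/8)(3a²−8), C₆ = −(a/12)(a²−120), C₇ = −(1/8)(3a²−80), and set (center condition S¹c⁸): a₀₃₁ = 0, b₂₁₁ = 0, b₁₂₁ = (7/2)a₂₁₁, b₀₂₁ = −6a₁₂₁, b₀₃₁ = (8/3)a₁₂₁, b₁₁₁ = 9a·a₁₂₁ + (9/2)a₂₁₁, b₁₀₁ = C₂a₁₂₁ + C₃a₂₁₁, b₂₀₁ = C₄a₁₂₁ + C₅a₂₁₁, b₃₀₁ = C₆a₁₂₁ + C₇a₂₁₁, b₀₁₁ = C₁a₁₂₁ − (9/8)a³a₂₁₁, a₀₀₁ = (1/64)(a²+2)[2a(a²+2)a₁₂₁ + 4a²a₂₁₁], b₀₀₁ = (1/64){8a³b₃₀₁ + 16a(2b₁₀₁ − a b₂₀₁) + 4(a²+2)(4b₀₁₁ − 2a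 b₁₁₁ + a²b₂₁₁) − (a²+2)²[4b₀₂₁ − 2a b₁₂₁ − (a²+2)b₀₃₁]}. Define the perturbations p₁(x,y) = a₀₀₁ + a₂₁₁x²y + a₁₂₁xy² and q₁(x,y) = b₀₀₁ + b₁₀₁x + b₀₁₁y + b₂₀₁x² + b₁₁₁xy + b₀₂₁y² + b₃₀₁x³ + b₂₁₁x²y + b₁₂₁xy² + b₀₃₁y³, and set N(x,y,ε) = f₁(x,y) + ε·(a₁₂₁r₁(x,y) + a₂₁₁r₂(x,y)) and D(x,y,ε) = f₂(x,y) + ε·(a₁₂₁r₃(x,y) + a₂₁₁r₄(x,y)) with r₁, r₂, r₃, r₄ as in the context. Then the polynomial in (x,y,ε) given by 5·D·[(P+εp₁)·∂N/∂x + (Q+εq₁)·∂N/∂y] − 4·N·[(P+εp₁)·∂D/∂x + (Q+εq₁)·∂D/∂y] has identically vanishing coefficients at ε⁰ and ε¹; equivalently, the Lie derivative of H₁ = N⁵/D⁴ along the perturbed vector field (P+εp₁, Q+εq₁) is O(ε²), so H₁ is an ε-order approximate first integral and the perturbed system is a center up to ε-order under the condition S¹c⁸. -/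

import Mathlib

noncomputable section

/-- The `x`-component of the unperturbed Żołądek cubic vector field. -/
def P₀ (a x y : ℝ) : ℝ := a + 5/2 * x + x * y + x^3

/-- The `y`-component of the unperturbed Żołądek cubic vector field. -/
def Q₀ (a x y : ℝ) : ℝ := -2*a*x + 2*y - 3*x^2 + 4*y^2 - a*x^3 + 6*x^2*y

/-- The invariant algebraic curve `f₁`. -/
def f₁ (x y : ℝ) : ℝ := x^4 + 4*x^2 + 4*y

/-- The invariant algebraic curve `f₂`. -/
def f₂ (a x y : ℝ) : ℝ := x^5 + 5*x^3 + 5*x*y + 5/2 * x + a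

/-- Constant `C₁`. -/
def C1 (a : ℝ) : ℝ := -(3/16)*(3*a^4 + 4*a^2 + 44)
/-- Constant `C₂`. -/
def C2 (a : ℝ) : ℝ := -(a/48)*(3*a^4 + 12*a^2 + 116)
/-- Constant `C₃`. -/
def C3 (a : ℝ) : ℝ := -(1/8)*(a^4 + 2*a^2 + 5)
/-- Constant `C₄`. -/
def C4 (a : ℝ) : ℝ := -(1/16)*(9*a^4 - 20*a^2 + 172)
/-- Constant `C₅`. -/
def C5 (a : ℝ) : ℝ := -(3*a/8)*(3*a^2 - 8)
/-- Constant `C₆`. -/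
def C6 (a : ℝ) : ℝ := -(a/12)*(a^2 - 120)
/-- Constant `C₇`. -/
def C7 (a : ℝ) : ℝ := -(1/8)*(3*a^2 - 80)

/-- `a₀₃₁ = 0` (center condition `S¹c⁸`). -/
def a031 : ℝ := 0
/-- `b₂₁₁ = 0`. -/
def b211 : ℝ := 0
/-- `b₁₂₁ = (7/2)a₂₁₁`. -/
def b121 (a211 : ℝ) : ℝ := (7/2)*a211
/-- `b₀₂₁ = −6a₁₂₁`. -/
def b021 (a121 : ℝ) : ℝ := -6*a121
/-- `b₀₃₁ = (8/3)a₁₂₁`. -/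
def b031 (a121 : ℝ) : ℝ := (8/3)*a121
/-- `b₁₁₁ = 9a·a₁₂₁ + (9/2)a₂₁₁`. -/
def b111 (a a121 a211 : ℝ) : ℝ := 9*a*a121 + (9/2)*a211
/-- `b₁₀₁ = C₂a₁₂₁ + C₃a₂₁₁`. -/
def b101 (a a121 a211 : ℝ) : ℝ := C2 a * a121 + C3 a * a211
/-- `b₂₀₁ = C₄a₁₂₁ + C₅a₂₁₁`. -/
def b201 (a a121 a211 : ℝ) : ℝ := C4 a * a121 + C5 a * a211
/-- `b₃₀₁ = C₆a₁₂₁ + C₇a₂₁₁`. -/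
def b301 (a a121 a211 : ℝ) : ℝ := C6 a * a121 + C7 a * a211
/-- `b₀₁₁ = C₁a₁₂₁ − (9/8)a³a₂₁₁`. -/
def b011 (a a121 a211 : ℝ) : ℝ := C1 a * a121 - (9/8)*a^3*a211
/-- `a₀₀₁ = (1/64)(a²+2)[2a(a²+2)a₁₂₁ + 4a²a₂₁₁]`. -/
def a001 (a a121 a211 : ℝ) : ℝ := (1/64)*(a^2+2)*(2*a*(a^2+2)*a121 + 4*a^2*a211)
/-- `b₀₀₁` from constraint (21). -/
def b001 (a a121 a211 : ℝ) : ℝ :=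
  (1/64)*(8*a^3*(b301 a a121 a211) + 16*a*(2*(b101 a a121 a211) - a*(b201 a a121 a211))
    + 4*(a^2+2)*(4*(b011 a a121 a211) - 2*a*(b111 a a121 a211) + a^2*b211)
    - (a^2+2)^2*(4*(b021 a121) - 2*a*(b121 a211) - (a^2+2)*(b031 a121)))

/-- The ε-order perturbation `p₁(x,y) = a₀₀₁ + a₂₁₁x²y + a₁₂₁xy²`. -/
def p1 (a a121 a211 x y : ℝ) : ℝ := a001 a a121 a211 + a211*x^2*y + a121*x*y^2

/-- The ε-order perturbation `q₁(x,y)`. -/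
def q1 (a a121 a211 x y : ℝ) : ℝ :=
  b001 a a121 a211 + b101 a a121 a211 * x + b011 a a121 a211 * y
    + b201 a a121 a211 * x^2 + b111 a a121 a211 * x*y + b021 a121 * y^2
    + b301 a a121 a211 * x^3 + b211 * x^2*y + b121 a211 * x*y^2 + b031 a121 * y^3

/-- Correction polynomial `r₁`. -/
def r1 (a x y : ℝ) : ℝ :=
  -(1/48)*(a^2*(3*a^2+4)*(5 + 2*y + 2*x^2 + x^4) + 220 - 192*a*x + 280*y
    + 120*x^2 - 64*y^2 + 128*a*x^3 + 64*x^2*y + 76*x^4)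

/-- Correction polynomial `r₂`. -/
def r2 (a x y : ℝ) : ℝ :=
  -(1/8)*a*(5*a^2-4) + 5*x - (1/8)*a*(a^2-4)*(2*y + 2*x^2 + x^4) + 2*x*y - 2*x^3

/-- Correction polynomial `r₃`. -/
def r3 (a x y : ℝ) : ℝ :=
  (1/192)*(a^2*(3*a^2+4)*(4*a - 15*x + 10*x*y + 10*x^3) + 304*a + 16*a^3 - 180*x
    - 40*(16*a*y - 8*a*x^2 + 5*x*y - 23*x^3 - 8*x*y^2 + 16*a*x^4 + 8*x^3*y))

/-- Correction polynomial `r₄`. -/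
def r4 (a x y : ℝ) : ℝ :=
  (a^2/8)*(a^2-1) - a*((15/32)*a^2 + 5/8)*x + (5/2)*x^2*((3/2) + y - x^2)
    + (5/16)*a*(a^2-4)*x*(y + x^2)

/-- Numerator `N = f₁ + ε(a₁₂₁r₁ + a₂₁₁r₂)` of the approximate first integral `H₁ = N⁵/D⁴`. -/
def Nfun (a a121 a211 x y ε : ℝ) : ℝ :=
  f₁ x y + ε*(a121 * r1 a x y + a211 * r2 a x y)

/-- Denominator `D = f₂ + ε(a₁₂₁r₃ + a₂₁₁r₄)` of the approximate first integral `H₁ = N⁵/D⁴`. -/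
def Dfun (a a121 a211 x y ε : ℝ) : ℝ :=
  f₂ a x y + ε*(a121 * r3 a x y + a211 * r4 a x y)

/-- `Φ = 5·D·[(P+εp₁)·∂N/∂x + (Q+εq₁)·∂N/∂y] − 4·N·[(P+εp₁)·∂D/∂x + (Q+εq₁)·∂D/∂y]`,
namely `D⁵/N⁴` times the Lie derivative of `H₁ = N⁵/D⁴` along `(P+εp₁, Q+εq₁)`. -/
def Φ (a a121 a211 x y ε : ℝ) : ℝ :=
  5 * Dfun a a121 a211 x y ε *
    ((P₀ a x y + ε * p1 a a121 a211 x y) * deriv (fun x' => Nfun a a121 a211 x' y ε) x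
      + (Q₀ a x y + ε * q1 a a121 a211 x y) * deriv (fun y' => Nfun a a121 a211 x y' ε) y)
  - 4 * Nfun a a121 a211 x y ε *
    ((P₀ a x y + ε * p1 a a121 a211 x y) * deriv (fun x' => Dfun a a121 a211 x' y ε) x
      + (Q₀ a x y + ε * q1 a a121 a211 x y) * deriv (fun y' => Dfun a a121 a211 x y' ε) y)

/-!
`f₁` and `f₂` are Darboux polynomials of `(P₀, Q₀)` with cofactors `K₁ = 4x² + 4y + 2` and
`K₂ = 5K₁/4`, so `5 f₂ X(f₁) - 4 f₁ X(f₂) = f₁ f₂ (5K₁ - 4K₂) = 0`: this is the `ε⁰` coefficient.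
The Lie derivative is bilinear in the vector field and the function, so `Φ` is a cubic polynomial
in `ε`; its linear coefficient is a polynomial in `(x, y)` that the center condition `S¹c⁸`
together with the corrections `r₁, …, r₄` make vanish identically.
-/

def lieDeriv (P Q F : ℝ → ℝ → ℝ) (x y : ℝ) : ℝ :=
  P x y * deriv (fun x' => F x' y) x + Q x y * deriv (fun y' => F x y') y

theorem lieDeriv_add_mul (P Q p q F G : ℝ → ℝ → ℝ) (ε x y : ℝ)
    (hFx : DifferentiableAt ℝ (fun x' => F x' y) x)
    (hFy : DifferentiableAt ℝ (fun y' => F x y') y)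
    (hGx : DifferentiableAt ℝ (fun x' => G x' y) x)
    (hGy : DifferentiableAt ℝ (fun y' => G x y') y) :
    lieDeriv (fun x y => P x y + ε * p x y) (fun x y => Q x y + ε * q x y)
        (fun x y => F x y + ε * G x y) x y
      = lieDeriv P Q F x y + ε * (lieDeriv p q F x y + lieDeriv P Q G x y)
        + ε ^ 2 * lieDeriv p q G x y := by
  simp only [lieDeriv, deriv_fun_add hFx (hGx.const_mul ε), deriv_fun_add hFy (hGy.const_mul ε),
    deriv_const_mul_field']
  ring

theorem hasDerivAt_const_mul_affine_mul_quadratic (c u₀ u₁ v₀ v₁ v₂ : ℝ) :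
    HasDerivAt (fun ε => c * (u₀ + ε * u₁) * (v₀ + ε * v₁ + ε ^ 2 * v₂))
      (c * (u₁ * v₀ + u₀ * v₁)) 0 := by
  have hu := (((hasDerivAt_id' (0 : ℝ)).mul_const u₁).const_add u₀).const_mul c
  have hv := (((hasDerivAt_id' (0 : ℝ)).mul_const v₁).const_add v₀).fun_add
    ((hasDerivAt_pow 2 (0 : ℝ)).mul_const v₂)
  exact (hu.mul hv).congr_deriv (by ring)

theorem lieDeriv_f₁ (a x y : ℝ) :
    lieDeriv (P₀ a) (Q₀ a) f₁ x y = (4 * x ^ 2 + 4 * y + 2) * f₁ x y := by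
  simp (disch := fun_prop) only [lieDeriv, f₁, P₀, Q₀, deriv_fun_add, deriv_fun_mul,
    deriv_fun_pow, deriv_const', deriv_id'', deriv_const_mul_id']
  ring

theorem lieDeriv_f₂ (a x y : ℝ) :
    lieDeriv (P₀ a) (Q₀ a) (f₂ a) x y = (5 * x ^ 2 + 5 * y + 5 / 2) * f₂ a x y := by
  simp (disch := fun_prop) only [lieDeriv, f₂, P₀, Q₀, deriv_fun_add, deriv_fun_mul,
    deriv_fun_pow, deriv_const', deriv_id'', deriv_const_mul_id']
  ring

-- The first-order corrections: `Nfun = f₁ + ε * Ncorr` and `Dfun = f₂ + ε * Dcorr`.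
def Ncorr (a a121 a211 x y : ℝ) : ℝ := a121 * r1 a x y + a211 * r2 a x y

def Dcorr (a a121 a211 x y : ℝ) : ℝ := a121 * r3 a x y + a211 * r4 a x y

section Expansion

variable (a a121 a211 x y : ℝ)

theorem Φ_eq_cubic (ε : ℝ) :
    Φ a a121 a211 x y ε =
      5 * (f₂ a x y + ε * Dcorr a a121 a211 x y) *
        (lieDeriv (P₀ a) (Q₀ a) f₁ x y
          + ε * (lieDeriv (p1 a a121 a211) (q1 a a121 a211) f₁ x y
            + lieDeriv (P₀ a) (Q₀ a) (Ncorr a a121 a211) x y)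
          + ε ^ 2 * lieDeriv (p1 a a121 a211) (q1 a a121 a211) (Ncorr a a121 a211) x y)
      - 4 * (f₁ x y + ε * Ncorr a a121 a211 x y) *
        (lieDeriv (P₀ a) (Q₀ a) (f₂ a) x y
          + ε * (lieDeriv (p1 a a121 a211) (q1 a a121 a211) (f₂ a) x y
            + lieDeriv (P₀ a) (Q₀ a) (Dcorr a a121 a211) x y)
          + ε ^ 2 * lieDeriv (p1 a a121 a211) (q1 a a121 a211) (Dcorr a a121 a211) x y) := by
  rw [← lieDeriv_add_mul, ← lieDeriv_add_mul]
  · rfl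
  all_goals simp only [f₁, f₂, Ncorr, Dcorr, r1, r2, r3, r4]; fun_prop

theorem Φ_linearCoeff_eq_zero :
    5 * (Dcorr a a121 a211 x y * lieDeriv (P₀ a) (Q₀ a) f₁ x y
        + f₂ a x y * (lieDeriv (p1 a a121 a211) (q1 a a121 a211) f₁ x y
          + lieDeriv (P₀ a) (Q₀ a) (Ncorr a a121 a211) x y))
      - 4 * (Ncorr a a121 a211 x y * lieDeriv (P₀ a) (Q₀ a) (f₂ a) x y
        + f₁ x y * (lieDeriv (p1 a a121 a211) (q1 a a121 a211) (f₂ a) x y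
          + lieDeriv (P₀ a) (Q₀ a) (Dcorr a a121 a211) x y)) = 0 := by
  rw [lieDeriv_f₁, lieDeriv_f₂]
  simp (disch := fun_prop) only [lieDeriv, f₁, f₂, Ncorr, Dcorr, r1, r2, r3, r4, deriv_fun_add,
    deriv_fun_sub, deriv_fun_mul, deriv_fun_pow, deriv_const', deriv_id'', deriv_const_mul_id',
    deriv_const_add_id]
  simp only [P₀, Q₀, p1, q1, a001, b001, b101, b011, b201, b111, b021, b301, b211, b121, b031,
    C1, C2, C3, C4, C5, C6, C7]
  ring

end Expansion

theorem center_up_to_eps_order_general (a : ℝ) (a121 a211 : ℝ)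
    (x y : ℝ) :
    Φ a a121 a211 x y 0 = 0 ∧ deriv (fun ε => Φ a a121 a211 x y ε) 0 = 0 := by
  constructor
  · rw [Φ_eq_cubic, lieDeriv_f₁, lieDeriv_f₂]
    ring
  · simp only [Φ_eq_cubic]
    exact ((hasDerivAt_const_mul_affine_mul_quadratic _ _ _ _ _ _).sub
      (hasDerivAt_const_mul_affine_mul_quadratic _ _ _ _ _ _)).deriv.trans
      (Φ_linearCoeff_eq_zero a a121 a211 x y)

/-- Under the center condition `S¹c⁸`, the polynomial
`Φ = 5·D·[(P+εp₁)·∂N/∂x + (Q+εq₁)·∂N/∂y] − 4·N·[(P+εp₁)·∂D/∂x + (Q+εq₁)·∂D/∂y]`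
has identically vanishing coefficients at `ε⁰` and `ε¹` — its value and its
`ε`-derivative vanish at `ε = 0`, for every `(x,y)`.  Equivalently, the Lie derivative
of `H₁ = N⁵/D⁴` along the perturbed vector field `(P+εp₁, Q+εq₁)` is `O(ε²)`,
so `H₁` is an ε-order approximate first integral and the perturbed system is a center
up to ε-order. -/
theorem center_up_to_eps_order (a : ℝ) (ha : a < -(2:ℝ)^((5:ℝ)/4)) (a121 a211 : ℝ)
    (x y : ℝ) :
    Φ a a121 a211 x y 0 = 0 ∧ deriv (fun ε => Φ a a121 a211 x y ε) 0 = 0 :=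
  center_up_to_eps_order_general a a121 a211 x y

end
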